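/- For every α > 0 there exists a constant C > 0 such that for every ε ∈ (0,1] and every t ∈ ℝ one has f_{1/2}(t) + (4α/π²)·ε·f₁(t) ≥ min{ ½·|exp(2πιt) − 1|² , 2αε } − C·ε^{3/2}·f₁(t), where exp is the complex exponential, ι the imaginary unit and |·| the complex modulus. -/

import Mathlib

/-- The distance of a real number to the set of integers. -/
noncomputable def distZ (t : ℝ) : ℝ := ⨅ n : ℤ, |t - n|

/-- The distance of a real number to the set of half-integers `(1/2)ℤ`. -/
noncomputable def distHalfZ (t : ℝ) : ℝ := ⨅ n : ℤ, |t - n / 2|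

/-- The interaction potential `f₁(t) = 2π²·dist(t,ℤ)²`. -/
noncomputable def f1 (t : ℝ) : ℝ := 2 * Real.pi ^ 2 * distZ t ^ 2

/-- The interaction potential `f_{1/2}(t) = 2π²·dist(t,(1/2)ℤ)²`. -/
noncomputable def fHalf (t : ℝ) : ℝ := 2 * Real.pi ^ 2 * distHalfZ t ^ 2

/-!
Write `d = dist(t, ℤ) ∈ [0, 1/2]`. Then `dist(t, ½ℤ) ≥ min(d, 1/2 - d)`, and since
`‖exp(iu) - 1‖ ≤ |u|` and `exp(2πi·)` is `1`-periodic, `½‖exp(2πit) - 1‖² ≤ 2π²d² = f₁(t)`.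
If `d ≤ 1/4` then `f_{1/2}(t) ≥ f₁(t)` already dominates the minimum. If `d ≥ 1/4`, then
`2αε` is recovered from `2π²(1/2 - d)² + 8αεd²` up to a defect of order `α²ε²` by completing a
square in `1/2 - d`; because `f₁(t) ≥ π²/8` here, the defect is absorbed by `α²ε^{3/2} f₁(t)`.
-/

open Real

lemma distZ_eq_abs_sub_round (t : ℝ) : distZ t = |t - round t| :=
  le_antisymm (ciInf_le ⟨0, by rintro _ ⟨n, rfl⟩; exact abs_nonneg _⟩ (round t))
    (le_ciInf (round_le t))

lemma distZ_nonneg (t : ℝ) : 0 ≤ distZ t := by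
  rw [distZ_eq_abs_sub_round]; exact abs_nonneg _

lemma distZ_le_half (t : ℝ) : distZ t ≤ 1 / 2 := by
  rw [distZ_eq_abs_sub_round]; exact abs_sub_round t

lemma f1_nonneg (t : ℝ) : 0 ≤ f1 t := by
  unfold f1; positivity

lemma norm_exp_two_pi_I_mul_sub_one_le (t : ℝ) :
    ‖Complex.exp (2 * π * Complex.I * t) - 1‖ ≤ 2 * π * distZ t := by
  have hper : Complex.exp (2 * π * Complex.I * t)
      = Complex.exp (Complex.I * ↑(2 * π * (t - round t))) := by
    rw [← mul_one (Complex.exp (Complex.I * _)), ← Complex.exp_int_mul_two_pi_mul_I (round t),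
      ← Complex.exp_add]
    push_cast; ring_nf
  rw [hper, distZ_eq_abs_sub_round]
  calc _ ≤ ‖2 * π * (t - round t)‖ := norm_exp_I_mul_ofReal_sub_one_le
    _ = 2 * π * |t - round t| := by rw [Real.norm_eq_abs, abs_mul, abs_of_pos two_pi_pos]

lemma half_norm_exp_two_pi_I_mul_sub_one_sq_le_f1 (t : ℝ) :
    1 / 2 * ‖Complex.exp (2 * π * Complex.I * t) - 1‖ ^ 2 ≤ f1 t := by
  have := pow_le_pow_left₀ (norm_nonneg _) (norm_exp_two_pi_I_mul_sub_one_le t) 2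
  rw [f1]; nlinarith

lemma half_le_abs_intCast_sub_odd_div_two (k m : ℤ) : 1 / 2 ≤ |(k : ℝ) - (2 * m + 1) / 2| := by
  rw [le_abs]
  rcases le_or_gt k m with h | h
  · right; have : (k : ℝ) ≤ m := by exact_mod_cast h
    linarith
  · left; have : (m : ℝ) + 1 ≤ k := by exact_mod_cast h
    linarith

lemma min_distZ_le_distHalfZ (t : ℝ) : min (distZ t) (1 / 2 - distZ t) ≤ distHalfZ t := by
  refine le_ciInf fun n => ?_
  obtain ⟨m, rfl | rfl⟩ := Int.even_or_odd' n
  · calc _ ≤ distZ t := min_le_left _ _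
      _ ≤ |t - m| := distZ_eq_abs_sub_round t ▸ round_le t m
      _ = _ := by push_cast; ring_nf
  · have := half_le_abs_intCast_sub_odd_div_two (round t) m
    have := abs_sub_le (round t : ℝ) t ((2 * m + 1) / 2)
    rw [abs_sub_comm (round t : ℝ) t, ← distZ_eq_abs_sub_round] at this
    push_cast
    linarith [min_le_right (distZ t) (1 / 2 - distZ t)]

lemma two_mul_mul_le_of_quarter_le (α ε d : ℝ) (hα : 0 ≤ α) (hε : 0 ≤ ε)
    (hd : 1 / 4 ≤ d) :
    2 * α * ε ≤ 2 * π ^ 2 * (1 / 2 - d) ^ 2 + 8 * α * ε * d ^ 2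
      + α ^ 2 * ε ^ 2 * (2 * π ^ 2 * d ^ 2) := by
  have hαε : 0 ≤ α * ε := mul_nonneg hα hε
  -- `8αεd² - 2αε = 2αε(2d - 1)² - 8αε(1/2 - d)`
  suffices h : 8 * α * ε * (1 / 2 - d) ≤
      2 * π ^ 2 * (1 / 2 - d) ^ 2 + α ^ 2 * ε ^ 2 * (2 * π ^ 2 * d ^ 2) by
    nlinarith [mul_nonneg hαε (sq_nonneg (2 * d - 1))]
  have hπ2 : 9 ≤ π ^ 2 := by nlinarith [pi_gt_three]
  have hπd : 4 ≤ π ^ 4 * d ^ 2 := by nlinarith [mul_le_mul hπ2 hπ2 (by norm_num) (by positivity)]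
  -- complete the square `2(π²(1/2 - d) - 2αε)²`; its constant `8α²ε²` is paid by `π⁴d² ≥ 4`
  refine le_of_mul_le_mul_left ?_ (pow_pos pi_pos 2)
  nlinarith [sq_nonneg (π ^ 2 * (1 / 2 - d) - 2 * α * ε),
    mul_le_mul_of_nonneg_left hπd (sq_nonneg (α * ε))]

lemma f1_le_fHalf_of_distZ_le_quarter {t : ℝ} (h : distZ t ≤ 1 / 4) : f1 t ≤ fHalf t := by
  have hmin := min_distZ_le_distHalfZ t
  rw [min_eq_left (by linarith)] at hmin
  unfold f1 fHalf
  gcongr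
  exact distZ_nonneg t

lemma sq_half_sub_distZ_le_fHalf {t : ℝ} (h : 1 / 4 ≤ distZ t) :
    2 * π ^ 2 * (1 / 2 - distZ t) ^ 2 ≤ fHalf t := by
  have hmin := min_distZ_le_distHalfZ t
  rw [min_eq_right (by linarith)] at hmin
  unfold fHalf
  gcongr
  linarith [distZ_le_half t]

/-- for every `α > 0` there is `C > 0` such that for every `ε ∈ (0,1]` and every
`t ∈ ℝ` one has
`f_{1/2}(t) + (4α/π²)·ε·f₁(t) ≥ min{ ½·|exp(2πιt) − 1|² , 2αε } − C·ε^{3/2}·f₁(t)`. -/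
theorem stmt6 (α : ℝ) (hα : 0 < α) :
    ∃ C : ℝ, 0 < C ∧ ∀ ε ∈ Set.Ioc (0 : ℝ) 1, ∀ t : ℝ,
      fHalf t + 4 * α / Real.pi ^ 2 * ε * f1 t ≥
        min (1 / 2 * ‖Complex.exp (2 * Real.pi * Complex.I * (t : ℂ)) - 1‖ ^ 2)
            (2 * α * ε)
          - C * ε ^ ((3 : ℝ) / 2) * f1 t := by
  refine ⟨α ^ 2, by positivity, ?_⟩
  rintro ε ⟨hε0, hε1⟩ t
  have hmin := min_le_min_right (2 * α * ε) (half_norm_exp_two_pi_I_mul_sub_one_sq_le_f1 t)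
  have hε : ε ^ 2 ≤ ε ^ ((3 : ℝ) / 2) := by
    simpa using rpow_le_rpow_of_exponent_ge hε0 hε1 (show (3 : ℝ) / 2 ≤ 2 by norm_num)
  have hC : α ^ 2 * ε ^ 2 * f1 t ≤ α ^ 2 * ε ^ ((3 : ℝ) / 2) * f1 t :=
    mul_le_mul_of_nonneg_right (by gcongr) (f1_nonneg t)
  have hC_nonneg : 0 ≤ α ^ 2 * ε ^ 2 * f1 t := mul_nonneg (by positivity) (f1_nonneg t)
  have hcoef : 4 * α / π ^ 2 * ε * f1 t = 8 * α * ε * distZ t ^ 2 := by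
    unfold f1; field_simp; ring
  rcases le_total (distZ t) (1 / 4) with hd | hd
  · have := f1_le_fHalf_of_distZ_le_quarter hd
    linarith [min_le_left (f1 t) (2 * α * ε),
      mul_nonneg (mul_nonneg hα.le hε0.le) (sq_nonneg (distZ t))]
  · have := sq_half_sub_distZ_le_fHalf hd
    have := two_mul_mul_le_of_quarter_le α ε (distZ t) hα.le hε0.le hd
    rw [← f1] at this
    linarith [min_le_right (f1 t) (2 * α * ε)]
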